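/- arXiv:2210.13327 — 4 statements merged into one kernel-verified Lean document; each statement's English description precedes it below -/
import Mathlib

section
/- For nonzero vectors u, û, v, v̂, dist(u vᵀ, û v̂ᵀ) ≤ dist(u,û) + dist(v,v̂), where dist is the square root of dist² defined via the normalized inner product. -/
open Matrix

/-- dist² via the normalized (Frobenius) inner product. -/
noncomputable def mDistSq {m n : Type*} [Fintype m] [Fintype n] (A B : Matrix m n ℝ) : ℝ :=
  1 - (∑ i, ∑ j, A i j * B i j) ^ 2 /
    ((∑ i, ∑ j, A i j * A i j) * (∑ i, ∑ j, B i j * B i j))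

/-- dist = sqrt of dist². -/
noncomputable def mDist {m n : Type*} [Fintype m] [Fintype n] (A B : Matrix m n ℝ) : ℝ :=
  Real.sqrt (mDistSq A B)

/-- dist² for vectors. -/
noncomputable def vDistSq {n : ℕ} (u v : Fin n → ℝ) : ℝ :=
  1 - (∑ i, u i * v i) ^ 2 / ((∑ i, u i * u i) * (∑ i, v i * v i))

/-- dist for vectors. -/
noncomputable def vDist {n : ℕ} (u v : Fin n → ℝ) : ℝ :=
  Real.sqrt (vDistSq u v)

lemma sum_sq_pos {n : ℕ} {u : Fin n → ℝ} (hu : u ≠ 0) : 0 < ∑ i, u i * u i := by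
  obtain ⟨i0, hi0⟩ : ∃ i, u i ≠ 0 := by
    by_contra h
    push_neg at h
    exact hu (funext fun i => h i)
  exact Finset.sum_pos' (fun i _ => mul_self_nonneg _)
    ⟨i0, Finset.mem_univ _, mul_self_pos.mpr hi0⟩

lemma cs_frac {n : ℕ} (u v : Fin n → ℝ) (hu : u ≠ 0) (hv : v ≠ 0) :
    (∑ i, u i * v i) ^ 2 / ((∑ i, u i * u i) * (∑ i, v i * v i)) ≤ 1 := by
  rw [div_le_one (mul_pos (sum_sq_pos hu) (sum_sq_pos hv))]
  calc (∑ i, u i * v i) ^ 2 ≤ (∑ i, u i ^ 2) * ∑ i, v i ^ 2 :=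
        Finset.sum_mul_sq_le_sq_mul_sq _ _ _
    _ = (∑ i, u i * u i) * (∑ i, v i * v i) := by simp [sq]

/-- dist(u vᵀ, û v̂ᵀ) ≤ dist(u,û) + dist(v,v̂). -/
theorem stmt_3 {d p : ℕ} (u uh : Fin d → ℝ) (v vh : Fin p → ℝ)
    (hu : u ≠ 0) (huh : uh ≠ 0) (hv : v ≠ 0) (hvh : vh ≠ 0) :
    mDist (vecMulVec u v) (vecMulVec uh vh) ≤ vDist u uh + vDist v vh := by
  have hSu := sum_sq_pos hu
  have hSuh := sum_sq_pos huh
  have hSv := sum_sq_pos hv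
  have hSvh := sum_sq_pos hvh
  set x : ℝ := (∑ i, u i * uh i) ^ 2 / ((∑ i, u i * u i) * (∑ i, uh i * uh i)) with hxdef
  set y : ℝ := (∑ i, v i * vh i) ^ 2 / ((∑ i, v i * v i) * (∑ i, vh i * vh i)) with hydef
  have hx0 : 0 ≤ x := by positivity
  have hy0 : 0 ≤ y := by positivity
  have hx1 : x ≤ 1 := cs_frac u uh hu huh
  have hy1 : y ≤ 1 := cs_frac v vh hv hvh
  have key : ∀ {k l : ℕ} (a b : Fin k → ℝ) (c e : Fin l → ℝ),
      (∑ i, ∑ j, (a i * c j) * (b i * e j)) = (∑ i, a i * b i) * (∑ j, c j * e j) := by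
    intro k l a b c e
    rw [Finset.sum_mul_sum]
    exact Finset.sum_congr rfl fun i _ => Finset.sum_congr rfl fun j _ => by ring
  have hm : mDistSq (vecMulVec u v) (vecMulVec uh vh) = 1 - x * y := by
    simp only [mDistSq, vecMulVec_apply, key]
    rw [hxdef, hydef]
    field_simp
  have ha : vDist u uh = Real.sqrt (1 - x) := rfl
  have hb : vDist v vh = Real.sqrt (1 - y) := rfl
  rw [mDist, hm, ha, hb]
  have hab : 1 - x * y ≤ (Real.sqrt (1 - x) + Real.sqrt (1 - y)) ^ 2 := by
    have h1 : Real.sqrt (1 - x) ^ 2 = 1 - x := Real.sq_sqrt (by linarith)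
    have h2 : Real.sqrt (1 - y) ^ 2 = 1 - y := Real.sq_sqrt (by linarith)
    nlinarith [Real.sqrt_nonneg (1 - x), Real.sqrt_nonneg (1 - y)]
  calc Real.sqrt (1 - x * y) ≤ Real.sqrt ((Real.sqrt (1 - x) + Real.sqrt (1 - y)) ^ 2) :=
        Real.sqrt_le_sqrt hab
    _ = _ := Real.sqrt_sq (by positivity)
end

section
/- For nonzero matrices U, Û ∈ R^{d1×p1} and V, V̂ ∈ R^{d2×p2}, the Kronecker products satisfy max{dist(U,Û), dist(V,V̂)} ≤ dist(U⊗V, Û⊗V̂) ≤ dist(U,Û) + dist(V,V̂). -/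
open Matrix Kronecker

noncomputable def ip {m n : Type*} [Fintype m] [Fintype n] (A B : Matrix m n ℝ) : ℝ :=
  ∑ i, ∑ j, A i j * B i j

lemma dsum {m n : Type*} [Fintype m] [Fintype n] (f : m → n → ℝ) :
    ∑ i, ∑ j, f i j = ∑ p : m × n, f p.1 p.2 :=
  (Fintype.sum_prod_type (f := fun p : m × n => f p.1 p.2)).symm

lemma ip_kron {d1 p1 d2 p2 : ℕ} (A C : Matrix (Fin d1) (Fin p1) ℝ)
    (B D : Matrix (Fin d2) (Fin p2) ℝ) :
    ip (A ⊗ₖ B) (C ⊗ₖ D) = ip A C * ip B D := by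
  simp only [ip, dsum, Matrix.kroneckerMap_apply]
  rw [Finset.sum_mul_sum, dsum]
  exact Fintype.sum_equiv (Equiv.prodProdProdComm (Fin d1) (Fin d2) (Fin p1) (Fin p2))
    _ _ (fun x => by simp [Equiv.prodProdProdComm]; ring)

lemma ip_cs {m n : Type*} [Fintype m] [Fintype n] (A B : Matrix m n ℝ) :
    ip A B ^ 2 ≤ ip A A * ip B B := by
  simp only [ip, dsum]
  have := Finset.sum_mul_sq_le_sq_mul_sq Finset.univ (fun p : m × n => A p.1 p.2)
    (fun p : m × n => B p.1 p.2)
  simpa [sq] using this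

lemma ip_pos {m n : Type*} [Fintype m] [Fintype n] {A : Matrix m n ℝ} (hA : A ≠ 0) :
    0 < ip A A := by
  simp only [ip, dsum]
  have h : ∃ p : m × n, A p.1 p.2 ≠ 0 := by
    by_contra h; push_neg at h
    exact hA (by ext i j; exact h (i, j))
  obtain ⟨p, hp⟩ := h
  exact Finset.sum_pos' (fun q _ => mul_self_nonneg _)
    ⟨p, Finset.mem_univ _, mul_self_pos.mpr hp⟩

lemma sqrt_add_le (x y : ℝ) (hx : 0 ≤ x) (hy : 0 ≤ y) :
    Real.sqrt (x + y) ≤ Real.sqrt x + Real.sqrt y := by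
  have h : x + y ≤ (Real.sqrt x + Real.sqrt y) ^ 2 := by
    have := Real.sq_sqrt hx
    have := Real.sq_sqrt hy
    nlinarith [Real.sqrt_nonneg x, Real.sqrt_nonneg y, mul_nonneg (Real.sqrt_nonneg x) (Real.sqrt_nonneg y)]
  calc Real.sqrt (x + y) ≤ Real.sqrt ((Real.sqrt x + Real.sqrt y) ^ 2) := Real.sqrt_le_sqrt h
    _ = Real.sqrt x + Real.sqrt y := Real.sqrt_sq (by positivity)

lemma mDistSq_eq {m n : Type*} [Fintype m] [Fintype n] (A B : Matrix m n ℝ) :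
    mDistSq A B = 1 - ip A B ^ 2 / (ip A A * ip B B) := rfl

/-- max{dist(U,Û), dist(V,V̂)} ≤ dist(U⊗V, Û⊗V̂) ≤ dist(U,Û) + dist(V,V̂). -/
theorem stmt_5 {d1 p1 d2 p2 : ℕ}
    (U Uh : Matrix (Fin d1) (Fin p1) ℝ) (V Vh : Matrix (Fin d2) (Fin p2) ℝ)
    (hU : U ≠ 0) (hUh : Uh ≠ 0) (hV : V ≠ 0) (hVh : Vh ≠ 0) :
    max (mDist U Uh) (mDist V Vh) ≤ mDist (U ⊗ₖ V) (Uh ⊗ₖ Vh) ∧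
      mDist (U ⊗ₖ V) (Uh ⊗ₖ Vh) ≤ mDist U Uh + mDist V Vh := by
  have hU1 := ip_pos hU; have hU2 := ip_pos hUh
  have hV1 := ip_pos hV; have hV2 := ip_pos hVh
  set cU : ℝ := ip U Uh ^ 2 / (ip U U * ip Uh Uh) with hcU
  set cV : ℝ := ip V Vh ^ 2 / (ip V V * ip Vh Vh) with hcV
  have hcU0 : 0 ≤ cU := by positivity
  have hcV0 : 0 ≤ cV := by positivity
  have hcU1 : cU ≤ 1 := (div_le_one (by positivity)).mpr (ip_cs U Uh)
  have hcV1 : cV ≤ 1 := (div_le_one (by positivity)).mpr (ip_cs V Vh)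
  have hKsq : mDistSq (U ⊗ₖ V) (Uh ⊗ₖ Vh) = 1 - cU * cV := by
    rw [mDistSq_eq, ip_kron, ip_kron, ip_kron, hcU, hcV]
    field_simp
  have hUsq : mDistSq U Uh = 1 - cU := by rw [mDistSq_eq]
  have hVsq : mDistSq V Vh = 1 - cV := by rw [mDistSq_eq]
  have hUK : mDist U Uh ≤ mDist (U ⊗ₖ V) (Uh ⊗ₖ Vh) := by
    rw [mDist, mDist, hKsq, hUsq]
    exact Real.sqrt_le_sqrt (by nlinarith)
  have hVK : mDist V Vh ≤ mDist (U ⊗ₖ V) (Uh ⊗ₖ Vh) := by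
    rw [mDist, mDist, hKsq, hVsq]
    exact Real.sqrt_le_sqrt (by nlinarith)
  refine ⟨max_le hUK hVK, ?_⟩
  rw [mDist, mDist, mDist, hKsq, hUsq, hVsq]
  calc Real.sqrt (1 - cU * cV) ≤ Real.sqrt ((1 - cU) + (1 - cV)) :=
        Real.sqrt_le_sqrt (by nlinarith)
    _ ≤ Real.sqrt (1 - cU) + Real.sqrt (1 - cV) :=
        sqrt_add_le _ _ (by linarith) (by linarith)
end

section
/- For nonzero matrices U_1,...,U_l and Û_1,...,Û_l of matching sizes, dist(⊗_{k=1}^l U_k, ⊗_{k=1}^l Û_k) ≤ Σ_{k=1}^l dist(U_k, Û_k), and moreover dist(⊗_{k=1}^l U_k, ⊗_{k=1}^l Û_k) ≥ max_k dist(U_k, Û_k). -/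
open Matrix

/-- The l-fold Kronecker product ⊗_{k} A_k, realized as a matrix indexed by the
product of the index sets: its ((i_k)_k, (j_k)_k) entry is Π_k (A_k)_{i_k, j_k}. -/
def kronFold {l : ℕ} {m n : Fin l → Type*} [∀ k, Fintype (m k)] [∀ k, Fintype (n k)]
    (A : ∀ k, Matrix (m k) (n k) ℝ) : Matrix (∀ k, m k) (∀ k, n k) ℝ :=
  fun i j => ∏ k, A k (i k) (j k)

/-!
Write `c_k = ⟨U_k, Û_k⟩² / (‖U_k‖² ‖Û_k‖²) ∈ [0, 1]` for the squared cosine of the angle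
between `U_k` and `Û_k`. Since inner products and norms are multiplicative under `⊗`, the squared
cosine of the Kronecker products is `∏ c_k`, and both bounds become inequalities about numbers
in `[0, 1]`: `∏ c_j ≤ c_k` gives the lower bound, and `1 - ab ≤ (1 - a) + (1 - b)` together with
subadditivity of `√` gives `√(1 - ∏ c_k) ≤ ∑ √(1 - c_k)` by induction.
-/

section Real

lemma Real.sqrt_add_le_sqrt_add_sqrt {x y : ℝ} (hx : 0 ≤ x) (hy : 0 ≤ y) :
    √(x + y) ≤ √x + √y :=
  Real.sqrt_le_iff.2 ⟨by positivity, by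
    nlinarith [Real.sq_sqrt hx, Real.sq_sqrt hy, Real.sqrt_nonneg x, Real.sqrt_nonneg y]⟩

lemma Real.sqrt_one_sub_prod_le_sum {ι : Type*} (s : Finset ι) {c : ι → ℝ}
    (h0 : ∀ i ∈ s, 0 ≤ c i) (h1 : ∀ i ∈ s, c i ≤ 1) :
    √(1 - ∏ i ∈ s, c i) ≤ ∑ i ∈ s, √(1 - c i) := by
  classical
  induction s using Finset.induction_on with
  | empty => simp
  | insert a s ha ih =>
    simp only [Finset.mem_insert, forall_eq_or_imp] at h0 h1
    have hP0 : 0 ≤ ∏ i ∈ s, c i := Finset.prod_nonneg h0.2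
    have hP1 : ∏ i ∈ s, c i ≤ 1 := Finset.prod_le_one h0.2 h1.2
    rw [Finset.prod_insert ha, Finset.sum_insert ha]
    calc √(1 - c a * ∏ i ∈ s, c i)
        ≤ √((1 - c a) + (1 - ∏ i ∈ s, c i)) := Real.sqrt_le_sqrt (by nlinarith)
      _ ≤ √(1 - c a) + √(1 - ∏ i ∈ s, c i) :=
          Real.sqrt_add_le_sqrt_add_sqrt (by linarith) (by linarith)
      _ ≤ √(1 - c a) + ∑ i ∈ s, √(1 - c i) := by gcongr; exact ih h0.2 h1.2

lemma Real.sqrt_one_sub_le_sqrt_one_sub_prod {ι : Type*} {s : Finset ι} {c : ι → ℝ}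
    (h0 : ∀ i ∈ s, 0 ≤ c i) (h1 : ∀ i ∈ s, c i ≤ 1) {k : ι} (hk : k ∈ s) :
    √(1 - c k) ≤ √(1 - ∏ i ∈ s, c i) := by
  have hprod : ∏ i ∈ s, c i ≤ c k := by
    simpa using Finset.prod_le_prod_of_subset_of_le_one (Finset.singleton_subset_iff.2 hk) h0
      fun i hi _ => h1 i hi
  exact Real.sqrt_le_sqrt (by linarith)

end Real

section Frobenius

variable {m n : Type*} [Fintype m] [Fintype n]

def frobInner (A B : Matrix m n ℝ) : ℝ := ∑ i, ∑ j, A i j * B i j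

noncomputable def cosSq (A B : Matrix m n ℝ) : ℝ :=
  frobInner A B ^ 2 / (frobInner A A * frobInner B B)

lemma mDist_eq_sqrt_one_sub_cosSq (A B : Matrix m n ℝ) : mDist A B = √(1 - cosSq A B) := rfl

lemma frobInner_self_nonneg (A : Matrix m n ℝ) : 0 ≤ frobInner A A :=
  Finset.sum_nonneg fun _ _ => Finset.sum_nonneg fun _ _ => mul_self_nonneg _

lemma frobInner_sq_le (A B : Matrix m n ℝ) :
    frobInner A B ^ 2 ≤ frobInner A A * frobInner B B := by
  simpa only [frobInner, ← Fintype.sum_prod_type', sq] using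
    Finset.sum_mul_sq_le_sq_mul_sq Finset.univ (fun ij : m × n => A ij.1 ij.2)
      (fun ij => B ij.1 ij.2)

lemma cosSq_nonneg (A B : Matrix m n ℝ) : 0 ≤ cosSq A B :=
  div_nonneg (sq_nonneg _) (mul_nonneg (frobInner_self_nonneg A) (frobInner_self_nonneg B))

lemma cosSq_le_one (A B : Matrix m n ℝ) : cosSq A B ≤ 1 :=
  div_le_one_of_le₀ (frobInner_sq_le A B)
    (mul_nonneg (frobInner_self_nonneg A) (frobInner_self_nonneg B))

end Frobenius

section Kronecker

variable {l : ℕ} {m n : Fin l → Type*} [∀ k, Fintype (m k)] [∀ k, Fintype (n k)]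

lemma frobInner_kronFold (A B : ∀ k, Matrix (m k) (n k) ℝ) :
    frobInner (kronFold A) (kronFold B) = ∏ k, frobInner (A k) (B k) := by
  simp only [frobInner, kronFold, ← Finset.prod_mul_distrib, Fintype.prod_sum]

lemma cosSq_kronFold (A B : ∀ k, Matrix (m k) (n k) ℝ) :
    cosSq (kronFold A) (kronFold B) = ∏ k, cosSq (A k) (B k) := by
  simp only [cosSq, frobInner_kronFold, Finset.prod_div_distrib, Finset.prod_mul_distrib,
    Finset.prod_pow]

end Kronecker

theorem stmt_6_general {l : ℕ} {m n : Fin l → Type*} [∀ k, Fintype (m k)] [∀ k, Fintype (n k)]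
    (U Uh : ∀ k, Matrix (m k) (n k) ℝ) :
    (∀ k, mDist (U k) (Uh k) ≤ mDist (kronFold U) (kronFold Uh)) ∧
      mDist (kronFold U) (kronFold Uh) ≤ ∑ k, mDist (U k) (Uh k) := by
  simp only [mDist_eq_sqrt_one_sub_cosSq, cosSq_kronFold]
  have h0 : ∀ k ∈ Finset.univ, 0 ≤ cosSq (U k) (Uh k) := fun k _ => cosSq_nonneg _ _
  have h1 : ∀ k ∈ Finset.univ, cosSq (U k) (Uh k) ≤ 1 := fun k _ => cosSq_le_one _ _
  exact ⟨fun k => Real.sqrt_one_sub_le_sqrt_one_sub_prod h0 h1 (Finset.mem_univ k),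
    Real.sqrt_one_sub_prod_le_sum _ h0 h1⟩

/-- max_k dist(U_k,Û_k) ≤ dist(⊗U_k, ⊗Û_k) ≤ Σ_k dist(U_k,Û_k). -/
theorem stmt_6 {l : ℕ} {m n : Fin l → Type*} [∀ k, Fintype (m k)] [∀ k, Fintype (n k)]
    (U Uh : ∀ k, Matrix (m k) (n k) ℝ)
    (hU : ∀ k, U k ≠ 0) (hUh : ∀ k, Uh k ≠ 0) :
    (∀ k, mDist (U k) (Uh k) ≤ mDist (kronFold U) (kronFold Uh)) ∧
      mDist (kronFold U) (kronFold Uh) ≤ ∑ k, mDist (U k) (Uh k) :=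
  stmt_6_general U Uh
end

section
/- Let M, M̂ be matrices with ‖M̂ − M‖_F ≤ ε, and suppose M = λ u vᵀ is rank one with ‖u‖=‖v‖=1 and λ>0. If û is the top left singular vector of M̂, then ‖M̂ û ûᵀ - M̂‖_F ≤ ‖M - M̂‖_F and hence ‖û ûᵀ M - M‖_F ≤ 2ε; consequently 1 − ⟨û,u⟩² ≤ 4ε²/λ². -/
open Matrix

noncomputable def froNorm {m n : Type*} [Fintype m] [Fintype n] (A : Matrix m n ℝ) : ℝ :=
  Real.sqrt (∑ i, ∑ j, A i j ^ 2)

/-!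
For a unit vector `w`, the projection `A ↦ w wᵀ A` splits `A` orthogonally, so `A - w wᵀ A` is
no larger than `A` in Frobenius norm. Since `u uᵀ` fixes `M = λ u vᵀ`, we get
`M̂ - u uᵀ M̂ = (I - u uᵀ)(M̂ - M)`, so the optimal `û` loses at most `‖M̂ - M‖`; the triangle
inequality then gives `‖û ûᵀ M - M‖ ≤ 2ε`. Finally `û ûᵀ M - M = λ (⟨û,u⟩ û - u) vᵀ` has squared
norm `λ² (1 - ⟨û,u⟩²)`.
-/

attribute [local instance] Matrix.frobeniusNormedAddCommGroup Matrix.frobeniusNormSMulClass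

section Frobenius

variable {m n : Type*} [Fintype m] [Fintype n]

lemma froNorm_eq_norm (A : Matrix m n ℝ) : froNorm A = ‖A‖ := by
  rw [frobenius_norm_def, ← Real.sqrt_eq_rpow, froNorm]
  simp only [Real.norm_eq_abs, Real.rpow_two, sq_abs]

lemma froNorm_sq (A : Matrix m n ℝ) : froNorm A ^ 2 = ∑ i, ∑ j, A i j ^ 2 :=
  Real.sq_sqrt (by positivity)

lemma froNorm_nonneg (A : Matrix m n ℝ) : 0 ≤ froNorm A :=
  Real.sqrt_nonneg _

lemma froNorm_sub_comm (A B : Matrix m n ℝ) : froNorm (A - B) = froNorm (B - A) := by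
  rw [froNorm_eq_norm, froNorm_eq_norm, norm_sub_rev]

lemma froNorm_add_le (A B : Matrix m n ℝ) : froNorm (A + B) ≤ froNorm A + froNorm B := by
  simpa only [froNorm_eq_norm] using norm_add_le A B

lemma froNorm_smul (c : ℝ) (A : Matrix m n ℝ) : froNorm (c • A) = |c| * froNorm A := by
  rw [froNorm_eq_norm, froNorm_eq_norm, norm_smul, Real.norm_eq_abs]

lemma froNorm_sq_vecMulVec (a : m → ℝ) (b : n → ℝ) :
    froNorm (vecMulVec a b) ^ 2 = (a ⬝ᵥ a) * (b ⬝ᵥ b) := by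
  rw [froNorm_sq]
  simp only [vecMulVec_apply, dotProduct, Finset.sum_mul_sum, sq]
  exact Finset.sum_congr rfl fun i _ => Finset.sum_congr rfl fun j _ => by ring

/-- Pythagoras: `A - w wᵀ A` is orthogonal to `w wᵀ A`, whose norm is `‖wᵀ A‖`. -/
lemma froNorm_sq_sub_vecMulVec_self_mul {w : m → ℝ} (hw : w ⬝ᵥ w = 1) (A : Matrix m n ℝ) :
    froNorm (A - vecMulVec w w * A) ^ 2 = froNorm A ^ 2 - (w ᵥ* A) ⬝ᵥ (w ᵥ* A) := by
  rw [vecMulVec_mul]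
  set x := w ᵥ* A with hx
  have hcross : ∑ i, ∑ j, A i j * (w i * x j) = x ⬝ᵥ x := by
    rw [Finset.sum_comm]
    simp only [hx, dotProduct, vecMul]
    exact Finset.sum_congr rfl fun j _ => by
      rw [Finset.sum_mul]; exact Finset.sum_congr rfl fun i _ => by ring
  have hsq : ∑ i, ∑ j, (w i * x j) ^ 2 = x ⬝ᵥ x := by
    simpa only [froNorm_sq, vecMulVec_apply, hw, one_mul] using froNorm_sq_vecMulVec w x
  have hexpand : ∀ i j, (A - vecMulVec w x) i j ^ 2
      = A i j ^ 2 - 2 * (A i j * (w i * x j)) + (w i * x j) ^ 2 := fun i j => by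
    rw [Matrix.sub_apply, vecMulVec_apply]; ring
  simp only [froNorm_sq, hexpand, Finset.sum_add_distrib, Finset.sum_sub_distrib,
    ← Finset.mul_sum, hcross, hsq]
  ring

lemma froNorm_sub_vecMulVec_self_mul_le {w : m → ℝ} (hw : w ⬝ᵥ w = 1) (A : Matrix m n ℝ) :
    froNorm (A - vecMulVec w w * A) ≤ froNorm A := by
  refine (pow_le_pow_iff_left₀ (froNorm_nonneg _) (froNorm_nonneg _) two_ne_zero).mp ?_
  rw [froNorm_sq_sub_vecMulVec_self_mul hw]
  have : 0 ≤ (w ᵥ* A) ⬝ᵥ (w ᵥ* A) := Finset.sum_nonneg fun j _ => mul_self_nonneg _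
  linarith

lemma froNorm_sub_vecMulVec_self_mul_le_of_mul_eq {w : m → ℝ} (hw : w ⬝ᵥ w = 1)
    {M : Matrix m n ℝ} (hM : vecMulVec w w * M = M) (Mh : Matrix m n ℝ) :
    froNorm (Mh - vecMulVec w w * Mh) ≤ froNorm (Mh - M) := by
  have h : Mh - vecMulVec w w * Mh = (Mh - M) - vecMulVec w w * (Mh - M) := by
    rw [Matrix.mul_sub, hM]; abel
  rw [h]
  exact froNorm_sub_vecMulVec_self_mul_le hw _

lemma froNorm_vecMulVec_self_mul_sub_le {w : m → ℝ} (hw : w ⬝ᵥ w = 1) (M Mh : Matrix m n ℝ) :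
    froNorm (vecMulVec w w * M - M)
      ≤ froNorm (M - Mh) + froNorm (Mh - vecMulVec w w * Mh) := by
  have h : vecMulVec w w * M - M
      = -(((M - Mh) - vecMulVec w w * (M - Mh)) + (Mh - vecMulVec w w * Mh)) := by
    rw [Matrix.mul_sub]; abel
  rw [h, froNorm_eq_norm, norm_neg, ← froNorm_eq_norm]
  exact (froNorm_add_le _ _).trans (by gcongr; exact froNorm_sub_vecMulVec_self_mul_le hw _)

lemma froNorm_sq_vecMulVec_self_mul_vecMulVec_sub {a u : m → ℝ} {v : n → ℝ}
    (ha : a ⬝ᵥ a = 1) (hu : u ⬝ᵥ u = 1) (hv : v ⬝ᵥ v = 1) :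
    froNorm (vecMulVec a a * vecMulVec u v - vecMulVec u v) ^ 2 = 1 - (a ⬝ᵥ u) ^ 2 := by
  rw [vecMulVec_mul_vecMulVec, vecMulVec_smul, ← smul_vecMulVec, ← sub_vecMulVec,
    froNorm_sq_vecMulVec, hv, mul_one]
  simp only [sub_dotProduct, dotProduct_sub, smul_dotProduct, dotProduct_smul, smul_eq_mul,
    ha, hu, dotProduct_comm u a]
  ring

end Frobenius

/-- SVD perturbation for a rank-one matrix M = λ u vᵀ: if ‖M̂ − M‖_F ≤ ε and û is
the top left singular vector of M̂ (the best rank-one left projection), then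
‖û ûᵀ M̂ − M̂‖_F ≤ ‖M − M̂‖_F, ‖û ûᵀ M − M‖_F ≤ 2ε, and 1 − ⟨û,u⟩² ≤ 4ε²/λ². -/
theorem stmt_17 {d p : ℕ} (M Mh : Matrix (Fin d) (Fin p) ℝ)
    (u : Fin d → ℝ) (v : Fin p → ℝ) (lam ε : ℝ)
    (hu : ∑ i, u i * u i = 1) (hv : ∑ j, v j * v j = 1) (hlam : 0 < lam)
    (hM : M = lam • vecMulVec u v)
    (hε : froNorm (Mh - M) ≤ ε)
    (uh : Fin d → ℝ) (huh : ∑ i, uh i * uh i = 1)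
    (hmin : ∀ w : Fin d → ℝ, (∑ i, w i * w i = 1) →
      froNorm (Mh - vecMulVec uh uh * Mh) ≤ froNorm (Mh - vecMulVec w w * Mh)) :
    froNorm (vecMulVec uh uh * Mh - Mh) ≤ froNorm (M - Mh) ∧
      froNorm (vecMulVec uh uh * M - M) ≤ 2 * ε ∧
      1 - (∑ i, uh i * u i) ^ 2 ≤ 4 * ε ^ 2 / lam ^ 2 := by
  have hfix : vecMulVec u u * M = M := by
    rw [hM, Matrix.mul_smul, vecMulVec_mul_vecMulVec, show u ⬝ᵥ u = 1 from hu, one_smul]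
  have hbest : froNorm (Mh - vecMulVec uh uh * Mh) ≤ froNorm (Mh - M) :=
    (hmin u hu).trans (froNorm_sub_vecMulVec_self_mul_le_of_mul_eq hu hfix Mh)
  have hrank : froNorm (vecMulVec uh uh * M - M) ≤ 2 * ε := by
    have := froNorm_vecMulVec_self_mul_sub_le huh M Mh
    rw [froNorm_sub_comm M] at this
    linarith
  refine ⟨by rwa [froNorm_sub_comm, froNorm_sub_comm M], hrank, ?_⟩
  have hsq : froNorm (vecMulVec uh uh * M - M) ^ 2 = lam ^ 2 * (1 - (uh ⬝ᵥ u) ^ 2) := by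
    rw [hM, Matrix.mul_smul, ← smul_sub, froNorm_smul, mul_pow, sq_abs,
      froNorm_sq_vecMulVec_self_mul_vecMulVec_sub huh hu hv]
  rw [le_div_iff₀ (by positivity), mul_comm]
  calc lam ^ 2 * (1 - (uh ⬝ᵥ u) ^ 2) = froNorm (vecMulVec uh uh * M - M) ^ 2 := hsq.symm
    _ ≤ (2 * ε) ^ 2 := pow_le_pow_left₀ (froNorm_nonneg _) hrank 2
    _ = 4 * ε ^ 2 := by ring
end
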